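/- Let ω be a Thiele function with Δω(i) < ω(1) for each i ∈ {1, 2, 3}, and let (A, H) be an RX3C instance: |A| = |H| = 3κ for an integer κ ≥ 1, every member of H is a 3-element subset of A, and every a ∈ A belongs to exactly three members of H. Construct the election with candidates: c(a) for each a ∈ A, c(H) for each H ∈ H, and a fresh candidate p; and votes V: one vote {p}; for each a ∈ A, one vote v(a) = {c(a)} ∪ {c(H) : a ∈ H ∈ H}; and for each H ∈ H, one vote {c(H)}. Let k = κ + 1, and fix any tie-breaking linear order ⊳ placing all candidates c(H) first, then all candidates c(a), then p last. Then H contains an exact set cover of A (κ pairwise disjoint members whose union is A) if and only if there exists C' ⊆ C ∖ {p} with |C'| ≤ 2κ such that p belongs to the seqω winning (κ+1)-committee of (C ∖ C', V_{C∖C'}) with respect to ⊳. -/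

import Mathlib

/-
Given an exact cover `H'`, delete the `2κ` candidates `c(H)` with `H ∉ H'`. While the committee is
a proper part of `c(H')`, an unelected `c(H)` with `H ∈ H'` has margin `ω(1) + 3ω(1)`, since by
disjointness none of its voters `v(a)` is represented yet; `p` has margin `ω(1)` and every `c(a)`
at most `Δω(0) = ω(1)`. So the first `κ` rounds elect `c(H')`, after which every `v(a)` is
represented exactly once, every `c(a)` has margin `Δω(1) < ω(1)`, and `p` wins.

Conversely, `p` always has margin `ω(1)` and is last in the tie-breaking order, so in the round it
wins every other remaining candidate has a smaller margin. Each `c(H)` has margin at least `ω(1)`,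
so all surviving ones, at least `3κ - 2κ = κ` of them, are already in the committee, which has at
most `κ` members. Hence only set candidates were deleted and exactly `κ` sets `H'` are elected.
Each `c(a)` remains with margin below `ω(1) = Δω(0)`, so `v(a)` is represented: `H'` covers `A`,
and `κ` triples covering `3κ` elements are pairwise disjoint.
-/


open Finset

attribute [local instance] Classical.propDecidable

universe u

variable {α : Type u}

/-- The Thiele ω-score of a committee `w` in the election with votes `V`. -/
noncomputable def thieleScore [DecidableEq α] (ω : ℕ → ℝ) (V : Multiset (Finset α))
    (w : Finset α) : ℝ :=
  (V.map fun v => ω (v ∩ w).card).sum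

/-- The ω margin contribution of candidate `c` to committee `w`. -/
noncomputable def marginContrib [DecidableEq α] (ω : ℕ → ℝ) (V : Multiset (Finset α))
    (w : Finset α) (c : α) : ℝ :=
  thieleScore ω V (insert c w) - thieleScore ω V w

/-- Candidates of `C \ w` whose ω margin contribution to `w` is maximum. -/
noncomputable def maxMarginSet [DecidableEq α] (ω : ℕ → ℝ) (V : Multiset (Finset α))
    (C w : Finset α) : Finset α :=
  (C \ w).filter fun c => ∀ c' ∈ C \ w, marginContrib ω V w c' ≤ marginContrib ω V w c

/-- Among the maximizers, the candidate(s) earliest in the tie-breaking order `pri`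
(the order with `a ⊳ b` iff `pri a < pri b`). -/
noncomputable def seqNext [DecidableEq α] (ω : ℕ → ℝ) (pri : α → ℕ) (V : Multiset (Finset α))
    (C w : Finset α) : Finset α :=
  (maxMarginSet ω V C w).filter fun c => ∀ c' ∈ maxMarginSet ω V C w, pri c ≤ pri c'

/-- The winning `k`-committee of the sequential ω-Thiele rule with tie-breaking order `pri`:
starting from `∅`, repeatedly add the candidate with maximum ω margin contribution,
breaking ties in favor of the candidate earliest in the order. -/
noncomputable def seqCommittee [DecidableEq α] (ω : ℕ → ℝ) (pri : α → ℕ)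
    (V : Multiset (Finset α)) (C : Finset α) : ℕ → Finset α
  | 0 => ∅
  | k + 1 => seqCommittee ω pri V C k ∪ seqNext ω pri V C (seqCommittee ω pri V C k)

/-- The AV score of a committee. -/
noncomputable def avScore [DecidableEq α] (V : Multiset (Finset α)) (w : Finset α) : ℕ :=
  (V.map fun v => (v ∩ w).card).sum

/-- AV winning `k`-committees: the `k`-subsets of `C` of maximum AV score. -/
noncomputable def avWinners [DecidableEq α] (C : Finset α) (V : Multiset (Finset α)) (k : ℕ) :
    Finset (Finset α) :=
  (C.powersetCard k).filter fun w => ∀ w' ∈ C.powersetCard k, avScore V w' ≤ avScore V w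

/-- The SAV score of a committee. -/
noncomputable def savScore [DecidableEq α] (V : Multiset (Finset α)) (w : Finset α) : ℝ :=
  (V.map fun v => ((w ∩ v).card : ℝ) / (v.card : ℝ)).sum

/-- SAV winning `k`-committees: the `k`-subsets of `C` of maximum SAV score. -/
noncomputable def savWinners [DecidableEq α] (C : Finset α) (V : Multiset (Finset α)) (k : ℕ) :
    Finset (Finset α) :=
  (C.powersetCard k).filter fun w => ∀ w' ∈ C.powersetCard k, savScore V w' ≤ savScore V w

/-- The NSAV score of a committee (with respect to candidate set `C`). -/
noncomputable def nsavScore [DecidableEq α] (C : Finset α) (V : Multiset (Finset α))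
    (w : Finset α) : ℝ :=
  (V.map fun v => ((w ∩ v).card : ℝ) / (v.card : ℝ)).sum
    - (V.map fun v => ((w \ v).card : ℝ) / ((C \ v).card : ℝ)).sum

/-- The PAV score of a committee. -/
noncomputable def pavScore [DecidableEq α] (V : Multiset (Finset α)) (w : Finset α) : ℝ :=
  (V.map fun v => ∑ i ∈ Finset.range (v ∩ w).card, (1 : ℝ) / (i + 1)).sum

/-- PAV winning `k`-committees: the `k`-subsets of `C` of maximum PAV score. -/
noncomputable def pavWinners [DecidableEq α] (C : Finset α) (V : Multiset (Finset α)) (k : ℕ) :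
    Finset (Finset α) :=
  (C.powersetCard k).filter fun w => ∀ w' ∈ C.powersetCard k, pavScore V w' ≤ pavScore V w

/-- The ABCCV score of a committee: the number of votes approving at least one member. -/
noncomputable def abccvScore [DecidableEq α] (V : Multiset (Finset α)) (w : Finset α) : ℕ :=
  Multiset.card (V.filter fun v => (v ∩ w).Nonempty)

/-- ABCCV winning `k`-committees: the `k`-subsets of `C` of maximum ABCCV score. -/
noncomputable def abccvWinners [DecidableEq α] (C : Finset α) (V : Multiset (Finset α)) (k : ℕ) :
    Finset (Finset α) :=
  (C.powersetCard k).filter fun w => ∀ w' ∈ C.powersetCard k, abccvScore V w' ≤ abccvScore V w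

/-- The MAV score of a committee: the maximum Hamming distance to a vote. -/
noncomputable def mavScore [DecidableEq α] (V : Multiset (Finset α)) (w : Finset α) : ℕ :=
  (V.map fun v => (w \ v).card + (v \ w).card).sup

/-- MAV winning `k`-committees: the `k`-subsets of `C` of minimum MAV score. -/
noncomputable def mavWinners [DecidableEq α] (C : Finset α) (V : Multiset (Finset α)) (k : ℕ) :
    Finset (Finset α) :=
  (C.powersetCard k).filter fun w => ∀ w' ∈ C.powersetCard k, mavScore V w ≤ mavScore V w'

namespace Stmt7

variable {β : Type u} [DecidableEq β]

/-- Candidate type: a candidate `c(a)` for `a ∈ A`, a candidate `c(H)` for `H ∈ 𝓗`,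
or the distinguished candidate `p`. -/
abbrev Cand (β : Type u) := β ⊕ Finset β ⊕ Unit

/-- The distinguished candidate `p`. -/
def pc : Cand β := Sum.inr (Sum.inr ())

/-- The candidate `c(H)`. -/
def cH (s : Finset β) : Cand β := Sum.inr (Sum.inl s)

/-- The whole candidate set. -/
def Ctot (A : Finset β) (H : Finset (Finset β)) : Finset (Cand β) :=
  insert pc (A.image Sum.inl ∪ H.image cH)

/-- The votes: `{p}`; for each `a ∈ A`, `v(a) = {c(a)} ∪ {c(H) : a ∈ H ∈ 𝓗}`; and for
each `H ∈ 𝓗`, the vote `{c(H)}`. -/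
def votes (A : Finset β) (H : Finset (Finset β)) : Multiset (Finset (Cand β)) :=
  ({pc} : Finset (Cand β)) ::ₘ
    (A.val.map (fun a => insert (Sum.inl a) ((H.filter fun s => a ∈ s).image cH))
      + H.val.map (fun s => ({cH s} : Finset (Cand β))))

end Stmt7

theorem Finset.pairwiseDisjoint_of_sum_card_le_card_biUnion {ι γ : Type*} [DecidableEq ι]
    [DecidableEq γ] {s : Finset ι} {f : ι → Finset γ}
    (h : ∑ i ∈ s, #(f i) ≤ #(s.biUnion f)) : (s : Set ι).PairwiseDisjoint f := by
  intro i hi j hj hij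
  rw [Function.onFun, Finset.disjoint_left]
  intro x hxi hxj
  have hcover : s.biUnion f ⊆ (s.erase j).biUnion f ∪ (f j).erase x := by
    intro y hy
    obtain ⟨k, hk, hyk⟩ := mem_biUnion.1 hy
    by_cases hkj : k = j
    · subst hkj
      by_cases hyx : y = x
      · subst hyx
        exact mem_union_left _ (mem_biUnion.2 ⟨i, mem_erase.2 ⟨hij, hi⟩, hxi⟩)
      · exact mem_union_right _ (mem_erase.2 ⟨hyx, hyk⟩)
    · exact mem_union_left _ (mem_biUnion.2 ⟨k, mem_erase.2 ⟨hkj, hk⟩, hyk⟩)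
  have hle : #(s.biUnion f) ≤ ∑ k ∈ s.erase j, #(f k) + (#(f j) - 1) :=
    calc #(s.biUnion f) ≤ #((s.erase j).biUnion f ∪ (f j).erase x) := card_le_card hcover
      _ ≤ #((s.erase j).biUnion f) + #((f j).erase x) := card_union_le _ _
      _ ≤ ∑ k ∈ s.erase j, #(f k) + (#(f j) - 1) :=
        add_le_add card_biUnion_le (card_erase_of_mem hxj).le
  have hsum := sum_erase_add s (fun k => #(f k)) hj
  have hpos : 0 < #(f j) := card_pos.2 ⟨x, hxj⟩
  omega

theorem Finset.sdiff_eq_and_subset_of_sdiff_subset {s t u : Finset α} [DecidableEq α]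
    (h : s \ t ⊆ u) (hcard : #u + #t ≤ #s) : u = s \ t ∧ t ⊆ s := by
  have h₁ := card_sdiff_add_card s t
  have h₂ := card_sdiff_add_card t s
  have h₃ := card_le_card h
  rw [union_comm] at h₂
  have hts : #(t \ s) = 0 := by omega
  exact ⟨(eq_of_subset_of_card_le h (by omega)).symm,
    sdiff_eq_empty_iff_subset.1 (card_eq_zero.1 hts)⟩

section SequentialThiele

variable [DecidableEq α] (ω : ℕ → ℝ) (pri : α → ℕ) (V : Multiset (Finset α))
  {C D S w : Finset α} {c m : α}

noncomputable def voteGain (w : Finset α) (c : α) (v : Finset α) : ℝ :=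
  if c ∈ v then ω (#(v ∩ w) + 1) - ω #(v ∩ w) else 0

theorem marginContrib_eq_sum_voteGain (hc : c ∉ w) :
    marginContrib ω V w c = (V.map (voteGain ω w c)).sum := by
  rw [marginContrib, thieleScore, thieleScore, ← Multiset.sum_map_sub]
  congr 1
  refine Multiset.map_congr rfl fun v _ => ?_
  by_cases hcv : c ∈ v
  · rw [voteGain, if_pos hcv, inter_insert_of_mem hcv, card_insert_of_notMem (by simp [hc])]
  · rw [voteGain, if_neg hcv, inter_insert_of_notMem hcv, sub_self]

theorem thieleScore_map_inter (hw : w ⊆ D) :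
    thieleScore ω (V.map (· ∩ D)) w = thieleScore ω V w := by
  simp only [thieleScore, Multiset.map_map, Function.comp_def, inter_assoc,
    inter_eq_right.2 hw]

theorem marginContrib_map_inter (hw : w ⊆ D) (hc : c ∈ D) :
    marginContrib ω (V.map (· ∩ D)) w c = marginContrib ω V w c := by
  rw [marginContrib, marginContrib, thieleScore_map_inter ω V hw,
    thieleScore_map_inter ω V (insert_subset hc hw)]

theorem seqNext_subset : seqNext ω pri V C w ⊆ C \ w :=
  (filter_subset _ _).trans (filter_subset _ _)

theorem marginContrib_le_of_mem_seqNext (hm : m ∈ seqNext ω pri V C w) (hc : c ∈ C \ w) :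
    marginContrib ω V w c ≤ marginContrib ω V w m :=
  (mem_filter.1 (mem_filter.1 hm).1).2 c hc

theorem marginContrib_lt_of_mem_seqNext (hm : m ∈ seqNext ω pri V C w) (hc : c ∈ C \ w)
    (hpri : pri c < pri m) : marginContrib ω V w c < marginContrib ω V w m := by
  refine (marginContrib_le_of_mem_seqNext ω pri V hm hc).lt_of_ne fun heq => ?_
  have hcmax : c ∈ maxMarginSet ω V C w :=
    mem_filter.2 ⟨hc, fun c' hc' => heq ▸ marginContrib_le_of_mem_seqNext ω pri V hm hc'⟩
  exact hpri.not_ge ((mem_filter.1 hm).2 c hcmax)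

theorem mem_seqNext_of_forall_lt (hc : c ∈ C \ w)
    (hlt : ∀ c' ∈ C \ w, c' ≠ c → marginContrib ω V w c' < marginContrib ω V w c) :
    c ∈ seqNext ω pri V C w := by
  have hcmax : c ∈ maxMarginSet ω V C w := by
    refine mem_filter.2 ⟨hc, fun c' hc' => ?_⟩
    rcases eq_or_ne c' c with rfl | hne
    · exact le_rfl
    · exact (hlt c' hc' hne).le
  refine mem_filter.2 ⟨hcmax, fun c' hc' => ?_⟩
  rcases eq_or_ne c' c with rfl | hne
  · exact le_rfl
  · obtain ⟨hc'w, hc'max⟩ := mem_filter.1 hc'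
    exact absurd (hc'max c hc) (hlt c' hc'w hne).not_ge

theorem seqNext_nonempty (h : (C \ w).Nonempty) : (seqNext ω pri V C w).Nonempty := by
  obtain ⟨b, hb, hbmax⟩ := exists_max_image (C \ w) (marginContrib ω V w) h
  obtain ⟨m, hm, hmmin⟩ :=
    exists_min_image (maxMarginSet ω V C w) pri ⟨b, mem_filter.2 ⟨hb, hbmax⟩⟩
  exact ⟨m, mem_filter.2 ⟨hm, hmmin⟩⟩

theorem card_seqNext_le_one (hinj : Set.InjOn pri C) : #(seqNext ω pri V C w) ≤ 1 := by
  refine card_le_one.2 fun x hx y hy => ?_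
  have hxC := (mem_sdiff.1 (seqNext_subset ω pri V hx)).1
  have hyC := (mem_sdiff.1 (seqNext_subset ω pri V hy)).1
  exact hinj hxC hyC (le_antisymm ((mem_filter.1 hx).2 y (mem_filter.1 hy).1)
    ((mem_filter.1 hy).2 x (mem_filter.1 hx).1))

theorem exists_seqNext_eq_singleton (hinj : Set.InjOn pri C) (h : (C \ w).Nonempty) :
    ∃ m, seqNext ω pri V C w = {m} :=
  card_eq_one.1 (le_antisymm (card_seqNext_le_one ω pri V hinj)
    (card_pos.2 (seqNext_nonempty ω pri V h)))

theorem seqCommittee_subset (n : ℕ) : seqCommittee ω pri V C n ⊆ C := by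
  induction n with
  | zero => exact empty_subset C
  | succ n ih => exact union_subset ih ((seqNext_subset ω pri V).trans sdiff_subset)

theorem card_seqCommittee_le (hinj : Set.InjOn pri C) (n : ℕ) :
    #(seqCommittee ω pri V C n) ≤ n := by
  induction n with
  | zero => simp [seqCommittee]
  | succ n ih =>
    exact (card_union_le _ _).trans (add_le_add ih (card_seqNext_le_one ω pri V hinj))

theorem exists_lt_of_mem_seqCommittee {n : ℕ} (hc : c ∈ seqCommittee ω pri V C n) :
    ∃ j < n, c ∈ seqNext ω pri V C (seqCommittee ω pri V C j) := by
  induction n with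
  | zero => simp [seqCommittee] at hc
  | succ n ih =>
    rcases mem_union.1 hc with hc | hc
    · obtain ⟨j, hj, hcj⟩ := ih hc
      exact ⟨j, by omega, hcj⟩
    · exact ⟨n, by omega, hc⟩

theorem seqCommittee_card_eq_of_dominant (hinj : Set.InjOn pri C) (hS : S ⊆ C)
    (hdom : ∀ w ⊂ S, ∃ c ∈ S \ w, ∀ c' ∈ C \ w, c' ∉ S →
      marginContrib ω V w c' < marginContrib ω V w c) :
    seqCommittee ω pri V C #S = S := by
  suffices h : ∀ j ≤ #S, seqCommittee ω pri V C j ⊆ S ∧ #(seqCommittee ω pri V C j) = j from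
    eq_of_subset_of_card_le (h _ le_rfl).1 (h _ le_rfl).2.ge
  intro j hj
  induction j with
  | zero => simp [seqCommittee]
  | succ j ih =>
    obtain ⟨hsub, hcard⟩ := ih (by omega)
    set w := seqCommittee ω pri V C j
    obtain ⟨c, hc, hcdom⟩ := hdom w (Finset.ssubset_iff_subset_ne.2 ⟨hsub, by rintro rfl; omega⟩)
    have hcC : c ∈ C \ w := sdiff_subset_sdiff hS le_rfl hc
    obtain ⟨m, hm⟩ := exists_seqNext_eq_singleton ω pri V hinj ⟨c, hcC⟩
    have hmw : m ∈ C \ w := seqNext_subset ω pri V (hm ▸ mem_singleton_self m)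
    have hmS : m ∈ S := by
      by_contra hmS
      exact (hcdom m hmw hmS).not_ge
        (marginContrib_le_of_mem_seqNext ω pri V (hm ▸ mem_singleton_self m) hcC)
    show w ∪ seqNext ω pri V C w ⊆ S ∧ #(w ∪ seqNext ω pri V C w) = j + 1
    rw [hm, union_comm, ← insert_eq, card_insert_of_notMem (mem_sdiff.1 hmw).2, hcard]
    exact ⟨insert_subset hmS hsub, rfl⟩

end SequentialThiele

namespace Stmt7

variable {β : Type u}

theorem cH_injective : Function.Injective (cH (β := β)) := fun _ _ h => by
  simpa [cH] using h

@[simp] theorem cH_inj {s t : Finset β} : (cH s : Cand β) = cH t ↔ s = t :=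
  cH_injective.eq_iff

@[simp] theorem cH_ne_pc (s : Finset β) : (cH s : Cand β) ≠ pc := by simp [pc, cH]

@[simp] theorem inl_ne_pc (a : β) : (Sum.inl a : Cand β) ≠ pc := by simp [pc]

@[simp] theorem inl_ne_cH (a : β) (s : Finset β) : (Sum.inl a : Cand β) ≠ cH s := by simp [cH]

@[simp] theorem cH_ne_inl (a : β) (s : Finset β) : (cH s : Cand β) ≠ Sum.inl a := by simp [cH]

variable [DecidableEq β]

def elementVote (H : Finset (Finset β)) (a : β) : Finset (Cand β) :=
  insert (Sum.inl a) ((H.filter fun s => a ∈ s).image cH)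

@[simp] theorem pc_notMem_elementVote (H : Finset (Finset β)) (a : β) :
    (pc : Cand β) ∉ elementVote H a := by
  simp [elementVote, eq_comm (a := pc)]

@[simp] theorem inl_mem_elementVote {H : Finset (Finset β)} {a b : β} :
    (Sum.inl b : Cand β) ∈ elementVote H a ↔ b = a := by
  simp [elementVote, eq_comm]

@[simp] theorem cH_mem_elementVote {H : Finset (Finset β)} {a : β} {t : Finset β} :
    (cH t : Cand β) ∈ elementVote H a ↔ t ∈ H ∧ a ∈ t := by
  simp [elementVote]

theorem mem_Ctot {A : Finset β} {H : Finset (Finset β)} {c : Cand β} :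
    c ∈ Ctot A H ↔ c = pc ∨ (∃ a ∈ A, c = Sum.inl a) ∨ ∃ s ∈ H, c = cH s := by
  simp [Ctot, eq_comm]

@[simp] theorem pc_mem_Ctot (A : Finset β) (H : Finset (Finset β)) : pc ∈ Ctot A H :=
  mem_Ctot.2 (Or.inl rfl)

theorem inl_mem_Ctot {A : Finset β} (H : Finset (Finset β)) {a : β} (ha : a ∈ A) :
    Sum.inl a ∈ Ctot A H :=
  mem_Ctot.2 (Or.inr (Or.inl ⟨a, ha, rfl⟩))

theorem image_cH_subset_Ctot (A : Finset β) (H : Finset (Finset β)) : H.image cH ⊆ Ctot A H :=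
  fun _ hc => mem_Ctot.2 (Or.inr (Or.inr (by simpa [eq_comm] using hc)))

theorem Ctot_sdiff_image_cH {A : Finset β} {H H' : Finset (Finset β)} (hH' : H' ⊆ H) :
    Ctot A H \ (H \ H').image cH = Ctot A H' := by
  ext c
  simp only [mem_sdiff, mem_Ctot, mem_image]
  constructor
  · rintro ⟨rfl | ⟨a, ha, rfl⟩ | ⟨s, hs, rfl⟩, hc⟩
    · exact Or.inl rfl
    · exact Or.inr (Or.inl ⟨a, ha, rfl⟩)
    · refine Or.inr (Or.inr ⟨s, ?_, rfl⟩)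
      by_contra hs'
      exact hc ⟨s, ⟨hs, hs'⟩, rfl⟩
  · rintro (rfl | ⟨a, ha, rfl⟩ | ⟨s, hs, rfl⟩)
    · exact ⟨Or.inl rfl, by simp⟩
    · exact ⟨Or.inr (Or.inl ⟨a, ha, rfl⟩), by simp⟩
    · exact ⟨Or.inr (Or.inr ⟨s, hH' hs, rfl⟩), by simp [hs]⟩

section Margins

variable (ω : ℕ → ℝ) (A : Finset β) (H : Finset (Finset β)) {w : Finset (Cand β)}

theorem marginContrib_votes {c : Cand β} (hc : c ∉ w) :
    marginContrib ω (votes A H) w c = voteGain ω w c {pc} +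
      (∑ a ∈ A, voteGain ω w c (elementVote H a) + ∑ s ∈ H, voteGain ω w c {cH s}) := by
  rw [marginContrib_eq_sum_voteGain ω _ hc]
  simp only [votes, Multiset.map_cons, Multiset.sum_cons, Multiset.map_add, Multiset.sum_add,
    Multiset.map_map]
  rfl

theorem marginContrib_votes_pc (hω0 : ω 0 = 0) (hw : pc ∉ w) :
    marginContrib ω (votes A H) w pc = ω 1 := by
  rw [marginContrib_votes ω A H hw]
  simp [voteGain, singleton_inter_of_notMem hw, hω0, eq_comm (a := pc)]

theorem marginContrib_votes_inl {a : β} (ha : a ∈ A) (hw : Sum.inl a ∉ w) :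
    marginContrib ω (votes A H) w (Sum.inl a) =
      ω (#(elementVote H a ∩ w) + 1) - ω #(elementVote H a ∩ w) := by
  rw [marginContrib_votes ω A H hw]
  simp [voteGain, ha]

theorem marginContrib_votes_cH (hω0 : ω 0 = 0) {t : Finset β} (ht : t ∈ H) (htA : t ⊆ A)
    (hw : cH t ∉ w) :
    marginContrib ω (votes A H) w (cH t) =
      ω 1 + ∑ a ∈ t, (ω (#(elementVote H a ∩ w) + 1) - ω #(elementVote H a ∩ w)) := by
  rw [marginContrib_votes ω A H hw]
  simp [voteGain, ht, sum_ite_mem, inter_eq_right.2 htA, singleton_inter_of_notMem hw, hω0,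
    add_comm]

theorem le_marginContrib_votes_cH (hω0 : ω 0 = 0) (hmono : ∀ i, ω i ≤ ω (i + 1))
    {t : Finset β} (ht : t ∈ H) (htA : t ⊆ A) (hw : cH t ∉ w) :
    ω 1 ≤ marginContrib ω (votes A H) w (cH t) := by
  rw [marginContrib_votes_cH ω A H hω0 ht htA hw]
  exact le_add_of_nonneg_right (sum_nonneg fun a _ => sub_nonneg.2 (hmono _))

end Margins

section ExactCover

variable (ω : ℕ → ℝ) {A : Finset β} {H H' : Finset (Finset β)} {w : Finset (Cand β)}

theorem elementVote_inter_eq_of_subset_image_cH (hH' : H' ⊆ H)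
    (hdisj : (H' : Set (Finset β)).PairwiseDisjoint id) (hw : w ⊆ H'.image cH) {s : Finset β}
    (hs : s ∈ H') {a : β} (ha : a ∈ s) : elementVote H a ∩ w = {cH s} ∩ w := by
  ext c
  simp only [mem_inter, mem_singleton]
  constructor
  · rintro ⟨hc, hcw⟩
    refine ⟨?_, hcw⟩
    obtain ⟨t, ht, rfl⟩ := mem_image.1 (hw hcw)
    rw [cH_inj]
    by_contra hts
    exact disjoint_left.1 (hdisj ht hs hts) (cH_mem_elementVote.1 hc).2 ha
  · rintro ⟨rfl, hcw⟩
    exact ⟨cH_mem_elementVote.2 ⟨hH' hs, ha⟩, hcw⟩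

theorem marginContrib_pc_of_subset_image_cH (hω0 : ω 0 = 0) (hw : w ⊆ H'.image cH) :
    marginContrib ω ((votes A H).map (· ∩ Ctot A H')) w pc = ω 1 := by
  have hpc : pc ∉ w := fun h => by
    obtain ⟨t, -, ht⟩ := mem_image.1 (hw h)
    exact cH_ne_pc t ht
  rw [marginContrib_map_inter ω _ (hw.trans (image_cH_subset_Ctot A H')) (pc_mem_Ctot A H'),
    marginContrib_votes_pc ω A H hω0 hpc]

theorem marginContrib_inl_of_exactCover (hω0 : ω 0 = 0) (hH' : H' ⊆ H)
    (hdisj : (H' : Set (Finset β)).PairwiseDisjoint id) (hw : w ⊆ H'.image cH) {s : Finset β}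
    (hs : s ∈ H') {a : β} (ha : a ∈ s) (haA : a ∈ A) :
    marginContrib ω ((votes A H).map (· ∩ Ctot A H')) w (Sum.inl a) =
      if cH s ∈ w then ω 2 - ω 1 else ω 1 := by
  have hnotMem : (Sum.inl a : Cand β) ∉ w := fun h => by
    obtain ⟨t, -, ht⟩ := mem_image.1 (hw h)
    exact cH_ne_inl a t ht
  rw [marginContrib_map_inter ω _ (hw.trans (image_cH_subset_Ctot A H')) (inl_mem_Ctot H' haA),
    marginContrib_votes_inl ω A H haA hnotMem,
    elementVote_inter_eq_of_subset_image_cH hH' hdisj hw hs ha]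
  split_ifs with hsw
  · rw [singleton_inter_of_mem hsw, card_singleton]
  · rw [singleton_inter_of_notMem hsw, card_empty, hω0, zero_add, sub_zero]

theorem marginContrib_cH_of_exactCover (hω0 : ω 0 = 0) (hH' : H' ⊆ H)
    (hdisj : (H' : Set (Finset β)).PairwiseDisjoint id) (hcover : H'.biUnion id = A)
    (hw : w ⊆ H'.image cH) {t : Finset β} (ht : t ∈ H') (htw : cH t ∉ w) :
    marginContrib ω ((votes A H).map (· ∩ Ctot A H')) w (cH t) = ω 1 + #t * ω 1 := by
  have htA : t ⊆ A := hcover ▸ subset_biUnion_of_mem id ht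
  have hgain : ∀ a ∈ t, ω (#(elementVote H a ∩ w) + 1) - ω #(elementVote H a ∩ w) = ω 1 := by
    intro a ha
    rw [elementVote_inter_eq_of_subset_image_cH hH' hdisj hw ht ha, singleton_inter_of_notMem htw,
      card_empty, hω0, zero_add, sub_zero]
  rw [marginContrib_map_inter ω _ (hw.trans (image_cH_subset_Ctot A H'))
      (image_cH_subset_Ctot A H' (mem_image_of_mem cH ht)),
    marginContrib_votes_cH ω A H hω0 (hH' ht) htA htw, sum_congr rfl hgain, sum_const,
    nsmul_eq_mul]

theorem seqCommittee_eq_image_cH_of_exactCover (hω0 : ω 0 = 0) (hω1 : 0 < ω 1)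
    (hΔ1 : ω 2 - ω 1 < ω 1) (pri : Cand β → ℕ) (hinj : Set.InjOn pri (Ctot A H'))
    (hH' : H' ⊆ H) (hne : ∀ s ∈ H', s.Nonempty)
    (hdisj : (H' : Set (Finset β)).PairwiseDisjoint id) (hcover : H'.biUnion id = A) :
    seqCommittee ω pri ((votes A H).map (· ∩ Ctot A H')) (Ctot A H') #H' = H'.image cH := by
  rw [← card_image_of_injective H' cH_injective]
  refine seqCommittee_card_eq_of_dominant ω pri _ hinj (image_cH_subset_Ctot A H')
    fun w hw => ?_
  obtain ⟨c, hcS, hcw⟩ := exists_of_ssubset hw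
  obtain ⟨t, ht, rfl⟩ := mem_image.1 hcS
  refine ⟨cH t, mem_sdiff.2 ⟨hcS, hcw⟩, fun c' hc' hc'S => ?_⟩
  rw [marginContrib_cH_of_exactCover ω hω0 hH' hdisj hcover hw.subset ht hcw]
  have hgain : 0 < (#t : ℝ) * ω 1 := mul_pos (by exact_mod_cast card_pos.2 (hne t ht)) hω1
  rcases mem_Ctot.1 (mem_sdiff.1 hc').1 with rfl | ⟨a, ha, rfl⟩ | ⟨s, hs, rfl⟩
  · linarith [marginContrib_pc_of_subset_image_cH ω (A := A) (H := H) hω0 hw.subset]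
  · obtain ⟨s, hs, has⟩ := mem_biUnion.1 (hcover ▸ ha)
    rw [marginContrib_inl_of_exactCover ω hω0 hH' hdisj hw.subset hs has ha]
    split_ifs <;> linarith
  · exact absurd (mem_image_of_mem cH hs) hc'S

theorem pc_mem_seqNext_of_exactCover (hω0 : ω 0 = 0) (hΔ1 : ω 2 - ω 1 < ω 1)
    (pri : Cand β → ℕ) (hH' : H' ⊆ H) (hdisj : (H' : Set (Finset β)).PairwiseDisjoint id)
    (hcover : H'.biUnion id = A) :
    pc ∈ seqNext ω pri ((votes A H).map (· ∩ Ctot A H')) (Ctot A H') (H'.image cH) := by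
  have hpcS : pc ∉ H'.image cH := fun h => by
    obtain ⟨t, -, ht⟩ := mem_image.1 h
    exact cH_ne_pc t ht
  refine mem_seqNext_of_forall_lt ω pri _ (mem_sdiff.2 ⟨pc_mem_Ctot A H', hpcS⟩)
    fun c hc hcpc => ?_
  rw [marginContrib_pc_of_subset_image_cH ω hω0 subset_rfl]
  rcases mem_Ctot.1 (mem_sdiff.1 hc).1 with rfl | ⟨a, ha, rfl⟩ | ⟨s, hs, rfl⟩
  · exact absurd rfl hcpc
  · obtain ⟨s, hs, has⟩ := mem_biUnion.1 (hcover ▸ ha)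
    rwa [marginContrib_inl_of_exactCover ω hω0 hH' hdisj subset_rfl hs has ha,
      if_pos (mem_image_of_mem cH hs)]
  · exact absurd (mem_image_of_mem cH hs) (mem_sdiff.1 hc).2

end ExactCover

section Deletion

variable (ω : ℕ → ℝ) {A : Finset β} {H : Finset (Finset β)} (pri : Cand β → ℕ)
  {D w : Finset (Cand β)}

theorem marginContrib_lt_of_pc_mem_seqNext (hω0 : ω 0 = 0) (hD : D ⊆ Ctot A H) (hwD : w ⊆ D)
    (hpri2 : ∀ a ∈ A, pri (Sum.inl a : Cand β) < pri pc)
    (hpri3 : ∀ s ∈ H, pri (cH s : Cand β) < pri pc)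
    (hpc : pc ∈ seqNext ω pri ((votes A H).map (· ∩ D)) D w) {c : Cand β} (hc : c ∈ D \ w)
    (hcpc : c ≠ pc) : marginContrib ω (votes A H) w c < ω 1 := by
  have hpcD := mem_sdiff.1 (seqNext_subset ω pri _ hpc)
  have hpri : pri c < pri pc := by
    rcases mem_Ctot.1 (hD (mem_sdiff.1 hc).1) with rfl | ⟨a, ha, rfl⟩ | ⟨s, hs, rfl⟩
    · exact absurd rfl hcpc
    · exact hpri2 a ha
    · exact hpri3 s hs
  have hlt := marginContrib_lt_of_mem_seqNext ω pri _ hpc hc hpri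
  rwa [marginContrib_map_inter ω _ hwD (mem_sdiff.1 hc).1, marginContrib_map_inter ω _ hwD hpcD.1,
    marginContrib_votes_pc ω A H hω0 hpcD.2] at hlt

theorem cH_mem_of_pc_mem_seqNext (hω0 : ω 0 = 0) (hmono : ∀ i, ω i ≤ ω (i + 1))
    (hD : D ⊆ Ctot A H) (hwD : w ⊆ D) (hpri2 : ∀ a ∈ A, pri (Sum.inl a : Cand β) < pri pc)
    (hpri3 : ∀ s ∈ H, pri (cH s : Cand β) < pri pc)
    (hpc : pc ∈ seqNext ω pri ((votes A H).map (· ∩ D)) D w) {t : Finset β} (ht : t ∈ H)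
    (htA : t ⊆ A) (htD : cH t ∈ D) : cH t ∈ w := by
  by_contra htw
  exact (le_marginContrib_votes_cH ω A H hω0 hmono ht htA htw).not_gt
    (marginContrib_lt_of_pc_mem_seqNext ω pri hω0 hD hwD hpri2 hpri3 hpc
      (mem_sdiff.2 ⟨htD, htw⟩) (cH_ne_pc t))

theorem exists_cH_mem_of_pc_mem_seqNext (hω0 : ω 0 = 0) (hD : D ⊆ Ctot A H) (hwD : w ⊆ D)
    (hpri2 : ∀ a ∈ A, pri (Sum.inl a : Cand β) < pri pc)
    (hpri3 : ∀ s ∈ H, pri (cH s : Cand β) < pri pc)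
    (hpc : pc ∈ seqNext ω pri ((votes A H).map (· ∩ D)) D w) (hwT : w ⊆ H.image cH) {a : β}
    (ha : a ∈ A) (haD : Sum.inl a ∈ D) : ∃ t ∈ H, a ∈ t ∧ cH t ∈ w := by
  have haw : (Sum.inl a : Cand β) ∉ w := fun h => by
    obtain ⟨t, -, ht⟩ := mem_image.1 (hwT h)
    exact cH_ne_inl a t ht
  have hlt := marginContrib_lt_of_pc_mem_seqNext ω pri hω0 hD hwD hpri2 hpri3 hpc
    (mem_sdiff.2 ⟨haD, haw⟩) (inl_ne_pc a)
  rw [marginContrib_votes_inl ω A H ha haw] at hlt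
  obtain ⟨c, hc⟩ : (elementVote H a ∩ w).Nonempty := by
    rw [nonempty_iff_ne_empty]
    intro hempty
    rw [hempty, card_empty, hω0, zero_add, sub_zero] at hlt
    exact lt_irrefl _ hlt
  obtain ⟨hcv, hcw⟩ := mem_inter.1 hc
  obtain ⟨t, ht, rfl⟩ := mem_image.1 (hwT hcw)
  exact ⟨t, ht, (cH_mem_elementVote.1 hcv).2, hcw⟩

theorem eq_image_cH_sdiff_of_pc_mem_seqNext (hω0 : ω 0 = 0) (hmono : ∀ i, ω i ≤ ω (i + 1))
    {κ : ℕ} (hH : #H = 3 * κ) (hHA : ∀ s ∈ H, s ⊆ A)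
    (hpri2 : ∀ a ∈ A, pri (Sum.inl a : Cand β) < pri pc)
    (hpri3 : ∀ s ∈ H, pri (cH s : Cand β) < pri pc) {C' : Finset (Cand β)} (hC' : #C' ≤ 2 * κ)
    (hwD : w ⊆ Ctot A H \ C') (hw : #w ≤ κ)
    (hpc : pc ∈ seqNext ω pri ((votes A H).map (· ∩ (Ctot A H \ C'))) (Ctot A H \ C') w) :
    w = H.image cH \ C' ∧ C' ⊆ H.image cH := by
  refine sdiff_eq_and_subset_of_sdiff_subset (fun c hc => ?_) ?_
  · obtain ⟨hcT, hcC'⟩ := mem_sdiff.1 hc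
    obtain ⟨t, ht, rfl⟩ := mem_image.1 hcT
    exact cH_mem_of_pc_mem_seqNext ω pri hω0 hmono sdiff_subset hwD hpri2 hpri3 hpc ht (hHA t ht)
      (mem_sdiff.2 ⟨image_cH_subset_Ctot A H hcT, hcC'⟩)
  · rw [card_image_of_injective _ cH_injective]
    omega

theorem exists_exactCover_of_pc_mem_seqCommittee (hω0 : ω 0 = 0)
    (hmono : ∀ i, ω i ≤ ω (i + 1)) {κ : ℕ} (hA : #A = 3 * κ) (hH : #H = 3 * κ)
    (hH3 : ∀ s ∈ H, s ⊆ A ∧ #s = 3) (hinj : Set.InjOn pri (Ctot A H))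
    (hpri2 : ∀ a ∈ A, pri (Sum.inl a : Cand β) < pri pc)
    (hpri3 : ∀ s ∈ H, pri (cH s : Cand β) < pri pc) {C' : Finset (Cand β)} (hC' : #C' ≤ 2 * κ)
    (hpc : pc ∈ seqCommittee ω pri ((votes A H).map (· ∩ (Ctot A H \ C'))) (Ctot A H \ C')
      (κ + 1)) :
    ∃ H' ⊆ H, #H' = κ ∧ (H' : Set (Finset β)).PairwiseDisjoint id ∧ H'.biUnion id = A := by
  set D := Ctot A H \ C'
  set V := (votes A H).map (· ∩ D)
  obtain ⟨j, hj, hpcj⟩ := exists_lt_of_mem_seqCommittee ω pri V hpc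
  set w := seqCommittee ω pri V D j
  have hwD : w ⊆ D := seqCommittee_subset ω pri V j
  have hwcard : #w ≤ j := card_seqCommittee_le ω pri V (hinj.mono (coe_subset.2 sdiff_subset)) j
  obtain ⟨hw, hC'T⟩ := eq_image_cH_sdiff_of_pc_mem_seqNext ω pri hω0 hmono hH
    (fun s hs => (hH3 s hs).1) hpri2 hpri3 hC' hwD (by omega) hpcj
  have hwT : w ⊆ H.image cH := by
    rw [hw]
    exact sdiff_subset
  have hwκ : #w = κ := by
    have hsdiff := card_sdiff_of_subset hC'T
    rw [← hw, card_image_of_injective _ cH_injective] at hsdiff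
    omega
  set H' := H.filter fun t => cH t ∈ w
  have hH'w : H'.image cH = w := by
    rw [← inter_eq_right.2 hwT, ← filter_mem_eq_inter, filter_image]
  have hH'card : #H' = κ := by rw [← card_image_of_injective H' cH_injective, hH'w, hwκ]
  have hunion : H'.biUnion id = A := by
    refine Subset.antisymm (biUnion_subset.2 fun t ht => (hH3 t (filter_subset _ _ ht)).1)
      fun a ha => ?_
    have haD : Sum.inl a ∈ D := mem_sdiff.2 ⟨inl_mem_Ctot H ha, fun h => by
      obtain ⟨t, -, ht⟩ := mem_image.1 (hC'T h)
      exact cH_ne_inl a t ht⟩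
    obtain ⟨t, ht, hat, htw⟩ := exists_cH_mem_of_pc_mem_seqNext ω pri hω0 sdiff_subset hwD
      hpri2 hpri3 hpcj hwT ha haD
    exact mem_biUnion.2 ⟨t, mem_filter.2 ⟨ht, htw⟩, hat⟩
  have hcard3 : ∀ t ∈ H', #(id t) = 3 := fun t ht => (hH3 t (filter_subset _ _ ht)).2
  refine ⟨H', filter_subset _ _, hH'card, pairwiseDisjoint_of_sum_card_le_card_biUnion ?_, hunion⟩
  rw [hunion, hA, sum_congr rfl hcard3, sum_const, hH'card, smul_eq_mul, mul_comm]

end Deletion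

theorem ccdc_seq_thiele_general (ω : ℕ → ℝ) (hω0 : ω 0 = 0) (hmono : ∀ i, ω i ≤ ω (i + 1))
    (hΔ : ∀ i : ℕ, 1 ≤ i → i ≤ 3 → ω (i + 1) - ω i < ω 1)
    (κ : ℕ)
    (A : Finset β) (H : Finset (Finset β))
    (hA : A.card = 3 * κ) (hHcard : H.card = 3 * κ)
    (hH3 : ∀ s ∈ H, s ⊆ A ∧ s.card = 3)
    (pri : Cand β → ℕ) (hinj : Set.InjOn pri (Ctot A H : Set (Cand β)))
    (hpri2 : ∀ a ∈ A, pri (Sum.inl a : Cand β) < pri pc)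
    (hpri3 : ∀ s ∈ H, pri (cH s : Cand β) < pri pc) :
    (∃ H' ⊆ H, H'.card = κ ∧ (∀ s ∈ H', ∀ t ∈ H', s ≠ t → Disjoint s t) ∧
        H'.biUnion (fun s => s) = A) ↔
      (∃ C' ⊆ Ctot A H \ {pc}, C'.card ≤ 2 * κ ∧
        pc ∈ seqCommittee ω pri ((votes A H).map (· ∩ (Ctot A H \ C')))
              (Ctot A H \ C') (κ + 1)) := by
  have hΔ1 : ω 2 - ω 1 < ω 1 := hΔ 1 le_rfl (by norm_num)
  have hω1 : 0 < ω 1 := by linarith [hmono 1]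
  constructor
  · rintro ⟨H', hH'H, hH'card, hdisj, hcover⟩
    have hne : ∀ s ∈ H', s.Nonempty := fun s hs =>
      card_pos.1 ((hH3 s (hH'H hs)).2 ▸ three_pos)
    have hinj' : Set.InjOn pri (Ctot A H') :=
      hinj.mono (coe_subset.2 (Ctot_sdiff_image_cH (A := A) hH'H ▸ sdiff_subset))
    refine ⟨(H \ H').image cH, fun c hc => ?_, ?_, ?_⟩
    · obtain ⟨s, hs, rfl⟩ := mem_image.1 hc
      exact mem_sdiff.2 ⟨image_cH_subset_Ctot A H (mem_image_of_mem cH (mem_sdiff.1 hs).1),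
        by simp⟩
    · rw [card_image_of_injective _ cH_injective, card_sdiff_of_subset hH'H, hHcard, hH'card]
      omega
    · rw [Ctot_sdiff_image_cH hH'H, ← hH'card, seqCommittee,
        seqCommittee_eq_image_cH_of_exactCover ω hω0 hω1 hΔ1 pri hinj' hH'H hne hdisj hcover]
      exact mem_union_right _ (pc_mem_seqNext_of_exactCover ω hω0 hΔ1 pri hH'H hdisj hcover)
  · rintro ⟨C', -, hC'card, hpc⟩
    exact exists_exactCover_of_pc_mem_seqCommittee ω pri hω0 hmono hA hHcard hH3 hinj hpri2
      hpri3 hC'card hpc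

/-- correctness of the reduction from RX3C to constructive control by
deleting candidates for sequential ω-Thiele rules with `Δω(i) < ω(1)` for `i ∈ {1,2,3}`. -/
theorem ccdc_seq_thiele (ω : ℕ → ℝ) (hω0 : ω 0 = 0) (hmono : ∀ i, ω i ≤ ω (i + 1))
    (hΔ : ∀ i : ℕ, 1 ≤ i → i ≤ 3 → ω (i + 1) - ω i < ω 1)
    (κ : ℕ) (hκ : 1 ≤ κ)
    (A : Finset β) (H : Finset (Finset β))
    (hA : A.card = 3 * κ) (hHcard : H.card = 3 * κ)
    (hH3 : ∀ s ∈ H, s ⊆ A ∧ s.card = 3)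
    (hocc : ∀ a ∈ A, (H.filter fun s => a ∈ s).card = 3)
    (pri : Cand β → ℕ) (hinj : Set.InjOn pri (Ctot A H : Set (Cand β)))
    (hpri1 : ∀ s ∈ H, ∀ a ∈ A, pri (cH s : Cand β) < pri (Sum.inl a : Cand β))
    (hpri2 : ∀ a ∈ A, pri (Sum.inl a : Cand β) < pri pc)
    (hpri3 : ∀ s ∈ H, pri (cH s : Cand β) < pri pc) :
    (∃ H' ⊆ H, H'.card = κ ∧ (∀ s ∈ H', ∀ t ∈ H', s ≠ t → Disjoint s t) ∧
        H'.biUnion (fun s => s) = A) ↔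
      (∃ C' ⊆ Ctot A H \ {pc}, C'.card ≤ 2 * κ ∧
        pc ∈ seqCommittee ω pri ((votes A H).map (· ∩ (Ctot A H \ C')))
              (Ctot A H \ C') (κ + 1)) :=
  ccdc_seq_thiele_general ω hω0 hmono hΔ κ A H hA hHcard hH3 pri hinj hpri2 hpri3

end Stmt7
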